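/- Let k be an algebraically closed field of characteristic 2 and b ∈ k with b³ = 1 and b ≠ 1. Let K ≤ GL₆(k) be the subgroup generated by the permutation matrices of (1 4 5 6)(2 3), (3 5)(4 6), (1 3 5) and (2 4 6) together with the diagonal matrix diag(b, 1, b⁻¹, 1, 1, 1). Then the natural 6-dimensional module k⁶ is a semisimple K-module: every K-invariant subspace of k⁶ admits a K-invariant direct complement. -/
import Mathlib

open Matrix

/-- The invertible permutation matrix associated to a permutation, as an element of `GL n k`. -/
noncomputable def permGL (k : Type*) [Field k] {n : Type*} [DecidableEq n] [Fintype n]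
    (s : Equiv.Perm n) : Matrix.GeneralLinearGroup n k :=
  Matrix.GeneralLinearGroup.mkOfDetNeZero (s.permMatrix k)
    (by
      rw [Matrix.det_permutation]
      rcases Int.units_eq_one_or (Equiv.Perm.sign s) with h | h <;> simp [h])

/-- The invertible diagonal matrix with nonzero diagonal entries `d`, as an element of `GL n k`. -/
noncomputable def diagGL (k : Type*) [Field k] {n : Type*} [DecidableEq n] [Fintype n]
    (d : n → k) (h : ∀ i, d i ≠ 0) : Matrix.GeneralLinearGroup n k :=
  Matrix.GeneralLinearGroup.mkOfDetNeZero (Matrix.diagonal d)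
    (by rw [Matrix.det_diagonal]; exact Finset.prod_ne_zero_iff.mpr fun i _ => h i)

lemma vec6_0 {α : Type*} (a0 a1 a2 a3 a4 a5 : α) : ![a0,a1,a2,a3,a4,a5] 0 = a0 := rfl
lemma vec6_1 {α : Type*} (a0 a1 a2 a3 a4 a5 : α) : ![a0,a1,a2,a3,a4,a5] 1 = a1 := rfl
lemma vec6_2 {α : Type*} (a0 a1 a2 a3 a4 a5 : α) : ![a0,a1,a2,a3,a4,a5] 2 = a2 := rfl
lemma vec6_3 {α : Type*} (a0 a1 a2 a3 a4 a5 : α) : ![a0,a1,a2,a3,a4,a5] 3 = a3 := rfl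
lemma vec6_4 {α : Type*} (a0 a1 a2 a3 a4 a5 : α) : ![a0,a1,a2,a3,a4,a5] 4 = a4 := rfl
lemma vec6_5 {α : Type*} (a0 a1 a2 a3 a4 a5 : α) : ![a0,a1,a2,a3,a4,a5] 5 = a5 := rfl

lemma permGL_mulVec (k : Type*) [Field k] {n : Type*} [DecidableEq n] [Fintype n]
    (s : Equiv.Perm n) (v : n → k) :
    ((permGL k s : Matrix.GeneralLinearGroup n k) : Matrix n n k).mulVec v = fun i => v (s i) := by
  funext i
  show (Equiv.Perm.permMatrix k s).mulVec v i = v (s i)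
  simp [Equiv.Perm.permMatrix, Matrix.mulVec, dotProduct, PEquiv.toMatrix_apply,
    Equiv.toPEquiv_apply]

lemma diagGL_mulVec (k : Type*) [Field k] {n : Type*} [DecidableEq n] [Fintype n]
    (d : n → k) (h : ∀ i, d i ≠ 0) (v : n → k) :
    ((diagGL k d h : Matrix.GeneralLinearGroup n k) : Matrix n n k).mulVec v
      = fun i => d i * v i := by
  funext i
  show (Matrix.diagonal d).mulVec v i = d i * v i
  rw [Matrix.mulVec_diagonal]

/-- The natural 6-dimensional module `k⁶` for the subgroup `K ≤ GL₆(k)` generated by the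
given permutation matrices and the diagonal matrix is semisimple: every K-invariant subspace has a K-invariant direct complement. -/
theorem stmt_8 (k : Type*) [Field k] [IsAlgClosed k] [CharP k 2]
    (b : k) (hb3 : b ^ 3 = 1) (hb1 : b ≠ 1)
    (K : Subgroup (Matrix.GeneralLinearGroup (Fin 6) k))
    (hK : K = Subgroup.closure
      { permGL k (c[(0 : Fin 6), 3, 4, 5] * c[(1 : Fin 6), 2]),
        permGL k (c[(2 : Fin 6), 4] * c[(3 : Fin 6), 5]),
        permGL k (c[(0 : Fin 6), 2, 4]),
        permGL k (c[(1 : Fin 6), 3, 5]),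
        diagGL k ![b, 1, b⁻¹, 1, 1, 1] (by
          have hb0 : b ≠ 0 := fun h => by simp [h] at hb3
          intro i
          fin_cases i
          exacts [hb0, one_ne_zero, inv_ne_zero hb0, one_ne_zero, one_ne_zero, one_ne_zero]) })
    (p : Submodule k (Fin 6 → k))
    (hp : ∀ g ∈ K, ∀ v ∈ p, (g : Matrix (Fin 6) (Fin 6) k).mulVec v ∈ p) :
    ∃ q : Submodule k (Fin 6 → k),
      (∀ g ∈ K, ∀ v ∈ q, (g : Matrix (Fin 6) (Fin 6) k).mulVec v ∈ q) ∧ IsCompl p q := by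
  subst hK
  by_cases hpbot : p = ⊥
  · refine ⟨⊤, fun g _ v _ => Submodule.mem_top, ?_⟩
    rw [hpbot]; exact isCompl_bot_top
  -- scalar identities
  have h2 : (2 : k) = 0 := by exact_mod_cast CharP.cast_eq_zero k 2
  have hq : b ^ 2 + b + 1 = 0 := by
    have hfac : (b - 1) * (b ^ 2 + b + 1) = 0 := by linear_combination hb3
    rcases mul_eq_zero.mp hfac with h | h
    · exact absurd (sub_eq_zero.mp h) hb1
    · exact h
  have hbinv : b⁻¹ = b ^ 2 := inv_eq_of_mul_eq_one_right (by linear_combination hb3)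
  have sB : ∀ x : k, x + x = 0 := fun x => by linear_combination x * h2
  have sA : ∀ x : k, b * x + b * (b * x) = x := fun x => by linear_combination x * hq - x * h2
  have sC : ∀ x : k, b⁻¹ * x + b⁻¹ * (b⁻¹ * x) = x := fun x => by
    rw [hbinv]; linear_combination x * b * hb3 + x * hq - x * h2
  -- membership of the generators in K
  have hg1 : permGL k (c[(0 : Fin 6), 3, 4, 5] * c[(1 : Fin 6), 2]) ∈
      Subgroup.closure { permGL k (c[(0 : Fin 6), 3, 4, 5] * c[(1 : Fin 6), 2]),
        permGL k (c[(2 : Fin 6), 4] * c[(3 : Fin 6), 5]),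
        permGL k (c[(0 : Fin 6), 2, 4]),
        permGL k (c[(1 : Fin 6), 3, 5]),
        diagGL k ![b, 1, b⁻¹, 1, 1, 1] (by
          have hb0 : b ≠ 0 := fun h => by simp [h] at hb3
          intro i
          fin_cases i
          exacts [hb0, one_ne_zero, inv_ne_zero hb0, one_ne_zero, one_ne_zero, one_ne_zero]) } := Subgroup.subset_closure (Set.mem_insert _ _)
  have hg2 : permGL k (c[(2 : Fin 6), 4] * c[(3 : Fin 6), 5]) ∈
      Subgroup.closure { permGL k (c[(0 : Fin 6), 3, 4, 5] * c[(1 : Fin 6), 2]),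
        permGL k (c[(2 : Fin 6), 4] * c[(3 : Fin 6), 5]),
        permGL k (c[(0 : Fin 6), 2, 4]),
        permGL k (c[(1 : Fin 6), 3, 5]),
        diagGL k ![b, 1, b⁻¹, 1, 1, 1] (by
          have hb0 : b ≠ 0 := fun h => by simp [h] at hb3
          intro i
          fin_cases i
          exacts [hb0, one_ne_zero, inv_ne_zero hb0, one_ne_zero, one_ne_zero, one_ne_zero]) } :=
    Subgroup.subset_closure (Set.mem_insert_of_mem _ (Set.mem_insert _ _))
  have hg3 : permGL k (c[(0 : Fin 6), 2, 4]) ∈ Subgroup.closure { permGL k (c[(0 : Fin 6), 3, 4, 5] * c[(1 : Fin 6), 2]),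
        permGL k (c[(2 : Fin 6), 4] * c[(3 : Fin 6), 5]),
        permGL k (c[(0 : Fin 6), 2, 4]),
        permGL k (c[(1 : Fin 6), 3, 5]),
        diagGL k ![b, 1, b⁻¹, 1, 1, 1] (by
          have hb0 : b ≠ 0 := fun h => by simp [h] at hb3
          intro i
          fin_cases i
          exacts [hb0, one_ne_zero, inv_ne_zero hb0, one_ne_zero, one_ne_zero, one_ne_zero]) } :=
    Subgroup.subset_closure
      (Set.mem_insert_of_mem _ (Set.mem_insert_of_mem _ (Set.mem_insert _ _)))
  have hg4 : permGL k (c[(1 : Fin 6), 3, 5]) ∈ Subgroup.closure { permGL k (c[(0 : Fin 6), 3, 4, 5] * c[(1 : Fin 6), 2]),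
        permGL k (c[(2 : Fin 6), 4] * c[(3 : Fin 6), 5]),
        permGL k (c[(0 : Fin 6), 2, 4]),
        permGL k (c[(1 : Fin 6), 3, 5]),
        diagGL k ![b, 1, b⁻¹, 1, 1, 1] (by
          have hb0 : b ≠ 0 := fun h => by simp [h] at hb3
          intro i
          fin_cases i
          exacts [hb0, one_ne_zero, inv_ne_zero hb0, one_ne_zero, one_ne_zero, one_ne_zero]) } :=
    Subgroup.subset_closure
      (Set.mem_insert_of_mem _ (Set.mem_insert_of_mem _
        (Set.mem_insert_of_mem _ (Set.mem_insert _ _))))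
  have hg5 : ∃ h, diagGL k ![b, 1, b⁻¹, 1, 1, 1] h ∈ Subgroup.closure
      { permGL k (c[(0 : Fin 6), 3, 4, 5] * c[(1 : Fin 6), 2]),
        permGL k (c[(2 : Fin 6), 4] * c[(3 : Fin 6), 5]),
        permGL k (c[(0 : Fin 6), 2, 4]),
        permGL k (c[(1 : Fin 6), 3, 5]),
        diagGL k ![b, 1, b⁻¹, 1, 1, 1] (by
          have hb0 : b ≠ 0 := fun h => by simp [h] at hb3
          intro i
          fin_cases i
          exacts [hb0, one_ne_zero, inv_ne_zero hb0, one_ne_zero, one_ne_zero, one_ne_zero]) } :=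
    ⟨_, Subgroup.subset_closure (Set.mem_insert_of_mem _ (Set.mem_insert_of_mem _
      (Set.mem_insert_of_mem _ (Set.mem_insert_of_mem _ rfl))))⟩
  obtain ⟨hd6, hg5⟩ := hg5
  -- move lemmas
  have hperm1 : ⇑(c[(0 : Fin 6), 3, 4, 5] * c[(1 : Fin 6), 2]) = ![3,2,1,4,5,0] := by decide
  have hperm2 : ⇑(c[(2 : Fin 6), 4] * c[(3 : Fin 6), 5]) = ![0,1,4,5,2,3] := by decide
  have hperm3 : ⇑(c[(0 : Fin 6), 2, 4]) = ![2,1,4,3,0,5] := by decide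
  have hperm4 : ⇑(c[(1 : Fin 6), 3, 5]) = ![0,3,2,5,4,1] := by decide
  have hm1 : ∀ v ∈ p, ![v 3, v 2, v 1, v 4, v 5, v 0] ∈ p := by
    intro v hv
    have h := hp _ hg1 v hv
    rw [permGL_mulVec] at h
    have e : (fun i => v ((c[(0 : Fin 6), 3, 4, 5] * c[(1 : Fin 6), 2]) i))
        = ![v 3, v 2, v 1, v 4, v 5, v 0] := by
      funext i; rw [hperm1]; fin_cases i <;> rfl
    rwa [e] at h
  have hm2 : ∀ v ∈ p, ![v 0, v 1, v 4, v 5, v 2, v 3] ∈ p := by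
    intro v hv
    have h := hp _ hg2 v hv
    rw [permGL_mulVec] at h
    have e : (fun i => v ((c[(2 : Fin 6), 4] * c[(3 : Fin 6), 5]) i))
        = ![v 0, v 1, v 4, v 5, v 2, v 3] := by
      funext i; rw [hperm2]; fin_cases i <;> rfl
    rwa [e] at h
  have hm3 : ∀ v ∈ p, ![v 2, v 1, v 4, v 3, v 0, v 5] ∈ p := by
    intro v hv
    have h := hp _ hg3 v hv
    rw [permGL_mulVec] at h
    have e : (fun i => v (c[(0 : Fin 6), 2, 4] i)) = ![v 2, v 1, v 4, v 3, v 0, v 5] := by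
      funext i; rw [hperm3]; fin_cases i <;> rfl
    rwa [e] at h
  have hm4 : ∀ v ∈ p, ![v 0, v 3, v 2, v 5, v 4, v 1] ∈ p := by
    intro v hv
    have h := hp _ hg4 v hv
    rw [permGL_mulVec] at h
    have e : (fun i => v (c[(1 : Fin 6), 3, 5] i)) = ![v 0, v 3, v 2, v 5, v 4, v 1] := by
      funext i; rw [hperm4]; fin_cases i <;> rfl
    rwa [e] at h
  have hD : ∀ v ∈ p, ![b * v 0, v 1, b⁻¹ * v 2, v 3, v 4, v 5] ∈ p := by
    intro v hv
    have h := hp _ hg5 v hv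
    rw [diagGL_mulVec] at h
    have e : (fun i => ![b, 1, b⁻¹, 1, 1, 1] i * v i)
        = ![b * v 0, v 1, b⁻¹ * v 2, v 3, v 4, v 5] := by
      funext i
      fin_cases i <;> simp [vec6_0, vec6_1, vec6_2, vec6_3, vec6_4, vec6_5]
    rwa [e] at h
  -- restriction to coordinates {0, 2}
  have h02 : ∀ v ∈ p, ![v 0, 0, v 2, 0, 0, 0] ∈ p := by
    intro v hv
    have h1 := hD v hv
    have h2' := hD _ h1
    simp only [vec6_0, vec6_1, vec6_2, vec6_3, vec6_4, vec6_5] at h2'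
    have h3 := p.add_mem h1 h2'
    have e : (![b * v 0, v 1, b⁻¹ * v 2, v 3, v 4, v 5]
        + ![b * (b * v 0), v 1, b⁻¹ * (b⁻¹ * v 2), v 3, v 4, v 5])
        = ![v 0, 0, v 2, 0, 0, 0] := by
      simp only [Matrix.cons_add_cons, Matrix.empty_add_empty, sA, sB, sC]
    rwa [e] at h3
  have hs0 : ∀ v ∈ p, ![v 0, 0, 0, 0, 0, 0] ∈ p := by
    intro v hv
    have t1 := h02 _ hv
    have t2 := hm2 _ t1
    simp only [vec6_0, vec6_1, vec6_2, vec6_3, vec6_4, vec6_5] at t2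
    have t3 := h02 _ t2
    simp only [vec6_0, vec6_1, vec6_2, vec6_3, vec6_4, vec6_5] at t3
    exact t3
  have hs1 : ∀ v ∈ p, ![0, v 1, 0, 0, 0, 0] ∈ p := by
    intro v hv
    have t1 := hm1 _ hv
    have t2 := h02 _ t1
    simp only [vec6_0, vec6_1, vec6_2, vec6_3, vec6_4, vec6_5] at t2
    have t3 := hm1 _ t2
    simp only [vec6_0, vec6_1, vec6_2, vec6_3, vec6_4, vec6_5] at t3
    have t4 := hm1 _ t3
    simp only [vec6_0, vec6_1, vec6_2, vec6_3, vec6_4, vec6_5] at t4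
    have t5 := h02 _ t4
    simp only [vec6_0, vec6_1, vec6_2, vec6_3, vec6_4, vec6_5] at t5
    have t6 := hm1 _ t5
    simp only [vec6_0, vec6_1, vec6_2, vec6_3, vec6_4, vec6_5] at t6
    exact t6
  have hs2 : ∀ v ∈ p, ![0, 0, v 2, 0, 0, 0] ∈ p := by
    intro v hv
    have t1 := h02 _ hv
    have t2 := hm1 _ t1
    simp only [vec6_0, vec6_1, vec6_2, vec6_3, vec6_4, vec6_5] at t2
    have t3 := hm1 _ t2
    simp only [vec6_0, vec6_1, vec6_2, vec6_3, vec6_4, vec6_5] at t3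
    have t4 := h02 _ t3
    simp only [vec6_0, vec6_1, vec6_2, vec6_3, vec6_4, vec6_5] at t4
    exact t4
  have hs3 : ∀ v ∈ p, ![0, 0, 0, v 3, 0, 0] ∈ p := by
    intro v hv
    have t1 := hm1 _ hv
    have t2 := h02 _ t1
    simp only [vec6_0, vec6_1, vec6_2, vec6_3, vec6_4, vec6_5] at t2
    have t3 := hm2 _ t2
    simp only [vec6_0, vec6_1, vec6_2, vec6_3, vec6_4, vec6_5] at t3
    have t4 := h02 _ t3
    simp only [vec6_0, vec6_1, vec6_2, vec6_3, vec6_4, vec6_5] at t4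
    have t5 := hm1 _ t4
    simp only [vec6_0, vec6_1, vec6_2, vec6_3, vec6_4, vec6_5] at t5
    have t6 := hm2 _ t5
    simp only [vec6_0, vec6_1, vec6_2, vec6_3, vec6_4, vec6_5] at t6
    exact t6
  have hs4 : ∀ v ∈ p, ![0, 0, 0, 0, v 4, 0] ∈ p := by
    intro v hv
    have t1 := hm2 _ hv
    have t2 := h02 _ t1
    simp only [vec6_0, vec6_1, vec6_2, vec6_3, vec6_4, vec6_5] at t2
    have t3 := hm3 _ t2
    simp only [vec6_0, vec6_1, vec6_2, vec6_3, vec6_4, vec6_5] at t3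
    have t4 := h02 _ t3
    simp only [vec6_0, vec6_1, vec6_2, vec6_3, vec6_4, vec6_5] at t4
    have t5 := hm3 _ t4
    simp only [vec6_0, vec6_1, vec6_2, vec6_3, vec6_4, vec6_5] at t5
    exact t5
  have hs5 : ∀ v ∈ p, ![0, 0, 0, 0, 0, v 5] ∈ p := by
    intro v hv
    have t1 := hm1 _ hv
    have t2 := hm2 _ t1
    simp only [vec6_0, vec6_1, vec6_2, vec6_3, vec6_4, vec6_5] at t2
    have t3 := h02 _ t2
    simp only [vec6_0, vec6_1, vec6_2, vec6_3, vec6_4, vec6_5] at t3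
    have t4 := hm3 _ t3
    simp only [vec6_0, vec6_1, vec6_2, vec6_3, vec6_4, vec6_5] at t4
    have t5 := h02 _ t4
    simp only [vec6_0, vec6_1, vec6_2, vec6_3, vec6_4, vec6_5] at t5
    have t6 := hm1 _ t5
    simp only [vec6_0, vec6_1, vec6_2, vec6_3, vec6_4, vec6_5] at t6
    exact t6
  -- from e₀ we can reach every eᵢ, and hence p = ⊤
  have hfin : ![(1 : k), 0, 0, 0, 0, 0] ∈ p →
      ∃ q : Submodule k (Fin 6 → k),
        (∀ g ∈ Subgroup.closure
          { permGL k (c[(0 : Fin 6), 3, 4, 5] * c[(1 : Fin 6), 2]),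
            permGL k (c[(2 : Fin 6), 4] * c[(3 : Fin 6), 5]),
            permGL k (c[(0 : Fin 6), 2, 4]),
            permGL k (c[(1 : Fin 6), 3, 5]),
            diagGL k ![b, 1, b⁻¹, 1, 1, 1] hd6 },
          ∀ v ∈ q, (g : Matrix (Fin 6) (Fin 6) k).mulVec v ∈ q) ∧ IsCompl p q := by
    intro he0
    have u1_1 := hm1 _ he0
    simp only [vec6_0, vec6_1, vec6_2, vec6_3, vec6_4, vec6_5] at u1_1
    have u1_2 := hm2 _ u1_1
    simp only [vec6_0, vec6_1, vec6_2, vec6_3, vec6_4, vec6_5] at u1_2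
    have u1_3 := hm4 _ u1_2
    simp only [vec6_0, vec6_1, vec6_2, vec6_3, vec6_4, vec6_5] at u1_3
    have he1 : ![(0:k), 1, 0, 0, 0, 0] ∈ p := u1_3
    have u2_1 := hm3 _ he0
    simp only [vec6_0, vec6_1, vec6_2, vec6_3, vec6_4, vec6_5] at u2_1
    have u2_2 := hm2 _ u2_1
    simp only [vec6_0, vec6_1, vec6_2, vec6_3, vec6_4, vec6_5] at u2_2
    have he2 : ![(0:k), 0, 1, 0, 0, 0] ∈ p := u2_2
    have u3_1 := hm1 _ he0
    simp only [vec6_0, vec6_1, vec6_2, vec6_3, vec6_4, vec6_5] at u3_1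
    have u3_2 := hm2 _ u3_1
    simp only [vec6_0, vec6_1, vec6_2, vec6_3, vec6_4, vec6_5] at u3_2
    have he3 : ![(0:k), 0, 0, 1, 0, 0] ∈ p := u3_2
    have u4_1 := hm3 _ he0
    simp only [vec6_0, vec6_1, vec6_2, vec6_3, vec6_4, vec6_5] at u4_1
    have he4 : ![(0:k), 0, 0, 0, 1, 0] ∈ p := u4_1
    have u5_1 := hm1 _ he0
    simp only [vec6_0, vec6_1, vec6_2, vec6_3, vec6_4, vec6_5] at u5_1
    have he5 : ![(0:k), 0, 0, 0, 0, 1] ∈ p := u5_1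
    have htop : p = ⊤ := by
      rw [Submodule.eq_top_iff']
      intro w
      have hsum := p.add_mem (p.add_mem (p.add_mem (p.add_mem (p.add_mem
        (p.smul_mem (w 0) he0) (p.smul_mem (w 1) he1)) (p.smul_mem (w 2) he2))
        (p.smul_mem (w 3) he3)) (p.smul_mem (w 4) he4)) (p.smul_mem (w 5) he5)
      have e : (w 0 • ![(1:k),0,0,0,0,0] + w 1 • ![(0:k),1,0,0,0,0] + w 2 • ![(0:k),0,1,0,0,0]
          + w 3 • ![(0:k),0,0,1,0,0] + w 4 • ![(0:k),0,0,0,1,0] + w 5 • ![(0:k),0,0,0,0,1])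
          = w := by
        funext i
        fin_cases i <;>
          simp [vec6_0, vec6_1, vec6_2, vec6_3, vec6_4, vec6_5, Matrix.smul_cons,
            Matrix.smul_empty, smul_eq_mul]
      rwa [e] at hsum
    refine ⟨⊥, fun g _ v hv => ?_, ?_⟩
    · rw [Submodule.mem_bot] at hv ⊢
      rw [hv, Matrix.mulVec_zero]
    · rw [htop]; exact isCompl_top_bot
  -- find a nonzero vector in p and isolate a coordinate
  obtain ⟨v, hv, hv0⟩ := Submodule.ne_bot_iff p |>.mp hpbot
  have hj : ∃ j, v j ≠ 0 := by
    by_contra hc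
    push_neg at hc
    exact hv0 (funext hc)
  obtain ⟨j, hj⟩ := hj
  fin_cases j
  -- case v 0 ≠ 0
  · have hsj := hs0 v hv
    have hscl := p.smul_mem (v 0)⁻¹ hsj
    have e : (v 0)⁻¹ • ![v 0, 0, 0, 0, 0, 0]
        = ![(1:k), 0, 0, 0, 0, 0] := by
      simp only [Matrix.smul_cons, Matrix.smul_empty, smul_eq_mul, mul_zero]
      rw [show (v 0)⁻¹ * v 0 = 1 from inv_mul_cancel₀ hj]
    rw [e] at hscl
    exact hfin hscl
  -- case v 1 ≠ 0
  · have hsj := hs1 v hv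
    have hscl := p.smul_mem (v 1)⁻¹ hsj
    have e : (v 1)⁻¹ • ![0, v 1, 0, 0, 0, 0]
        = ![(0:k), 1, 0, 0, 0, 0] := by
      simp only [Matrix.smul_cons, Matrix.smul_empty, smul_eq_mul, mul_zero]
      rw [show (v 1)⁻¹ * v 1 = 1 from inv_mul_cancel₀ hj]
    rw [e] at hscl
    have c1_1 := hm1 _ hscl
    simp only [vec6_0, vec6_1, vec6_2, vec6_3, vec6_4, vec6_5] at c1_1
    have c1_2 := hm3 _ c1_1
    simp only [vec6_0, vec6_1, vec6_2, vec6_3, vec6_4, vec6_5] at c1_2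
    exact hfin c1_2
  -- case v 2 ≠ 0
  · have hsj := hs2 v hv
    have hscl := p.smul_mem (v 2)⁻¹ hsj
    have e : (v 2)⁻¹ • ![0, 0, v 2, 0, 0, 0]
        = ![(0:k), 0, 1, 0, 0, 0] := by
      simp only [Matrix.smul_cons, Matrix.smul_empty, smul_eq_mul, mul_zero]
      rw [show (v 2)⁻¹ * v 2 = 1 from inv_mul_cancel₀ hj]
    rw [e] at hscl
    have c2_1 := hm3 _ hscl
    simp only [vec6_0, vec6_1, vec6_2, vec6_3, vec6_4, vec6_5] at c2_1
    exact hfin c2_1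
  -- case v 3 ≠ 0
  · have hsj := hs3 v hv
    have hscl := p.smul_mem (v 3)⁻¹ hsj
    have e : (v 3)⁻¹ • ![0, 0, 0, v 3, 0, 0]
        = ![(0:k), 0, 0, 1, 0, 0] := by
      simp only [Matrix.smul_cons, Matrix.smul_empty, smul_eq_mul, mul_zero]
      rw [show (v 3)⁻¹ * v 3 = 1 from inv_mul_cancel₀ hj]
    rw [e] at hscl
    have c3_1 := hm1 _ hscl
    simp only [vec6_0, vec6_1, vec6_2, vec6_3, vec6_4, vec6_5] at c3_1
    exact hfin c3_1
  -- case v 4 ≠ 0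
  · have hsj := hs4 v hv
    have hscl := p.smul_mem (v 4)⁻¹ hsj
    have e : (v 4)⁻¹ • ![0, 0, 0, 0, v 4, 0]
        = ![(0:k), 0, 0, 0, 1, 0] := by
      simp only [Matrix.smul_cons, Matrix.smul_empty, smul_eq_mul, mul_zero]
      rw [show (v 4)⁻¹ * v 4 = 1 from inv_mul_cancel₀ hj]
    rw [e] at hscl
    have c4_1 := hm1 _ hscl
    simp only [vec6_0, vec6_1, vec6_2, vec6_3, vec6_4, vec6_5] at c4_1
    have c4_2 := hm1 _ c4_1
    simp only [vec6_0, vec6_1, vec6_2, vec6_3, vec6_4, vec6_5] at c4_2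
    exact hfin c4_2
  -- case v 5 ≠ 0
  · have hsj := hs5 v hv
    have hscl := p.smul_mem (v 5)⁻¹ hsj
    have e : (v 5)⁻¹ • ![0, 0, 0, 0, 0, v 5]
        = ![(0:k), 0, 0, 0, 0, 1] := by
      simp only [Matrix.smul_cons, Matrix.smul_empty, smul_eq_mul, mul_zero]
      rw [show (v 5)⁻¹ * v 5 = 1 from inv_mul_cancel₀ hj]
    rw [e] at hscl
    have c5_1 := hm2 _ hscl
    simp only [vec6_0, vec6_1, vec6_2, vec6_3, vec6_4, vec6_5] at c5_1
    have c5_2 := hm1 _ c5_1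
    simp only [vec6_0, vec6_1, vec6_2, vec6_3, vec6_4, vec6_5] at c5_2
    exact hfin c5_2
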